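/- arXiv:math/0202056 — 2 statements merged into one kernel-verified Lean document; each statement's English description precedes it below -/
import Mathlib

section
/- Let V be a vertex operator algebra. Then the (-1)-st product a·b = a₋₁b descends to V/C₂(V), making it a commutative associative algebra, where C₂(V) = span{u₋₂v : u,v ∈ V}. -/
/-- A vertex (operator) algebra structure on a complex vector space `V`:
a family of products `Y u n : V →ₗ[ℂ] V` (the coefficients of the vertex
operator `Y(u,z) = ∑ₙ uₙ z^{-n-1}`), a vacuum vector `𝟏`, and the translation
operator `T = L(-1)`, subject to the truncation, vacuum, creation, translation
(`Y(Tv,z) = d/dz Y(v,z)`) axioms and the Borcherds (Jacobi) identity in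
coefficient form. -/
structure VOA (V : Type*) [AddCommGroup V] [Module ℂ V] where
  /-- the `n`-th product: `u, v ↦ uₙ v` -/
  Y : V → ℤ → V →ₗ[ℂ] V
  Y_add : ∀ (u v : V) (n : ℤ), Y (u + v) n = Y u n + Y v n
  Y_smul : ∀ (c : ℂ) (u : V) (n : ℤ), Y (c • u) n = c • Y u n
  /-- the vacuum vector `𝟏` -/
  vac : V
  /-- the translation operator `T = L(-1)` -/
  T : V →ₗ[ℂ] V
  truncation : ∀ u v : V, ∃ N : ℤ, ∀ n ≥ N, Y u n v = 0
  vacuum_axiom : ∀ (n : ℤ) (v : V), Y vac n v = if n = -1 then v else 0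
  creation_neg_one : ∀ v : V, Y v (-1) vac = v
  creation_nonneg : ∀ (v : V) (n : ℤ), 0 ≤ n → Y v n vac = 0
  creation_neg_two : ∀ v : V, Y v (-2) vac = T v
  /-- `Y(Tv, z) = (d/dz) Y(v, z)`, i.e. `(Tv)ₙ = -n · vₙ₋₁` -/
  translation : ∀ (v : V) (n : ℤ), Y (T v) n = (-n : ℤ) • Y v (n - 1)
  /-- the Borcherds (Jacobi) identity in coefficient form -/
  borcherds : ∀ (a b c : V) (p q r : ℤ),
    ∑ᶠ i : ℕ, (Ring.choose p i) • Y (Y a (r + i) b) (p + q - i) c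
      = ∑ᶠ i : ℕ, ((-1 : ℤ) ^ i * Ring.choose r i) •
          (Y a (p + r - i) (Y b (q + i) c)
            - (r.negOnePow : ℤ) • Y b (q + r - i) (Y a (p + i) c))

variable {V : Type*} [AddCommGroup V] [Module ℂ V]

/-- `Cₙ(V) = span{ u₋ₙ v }`. -/
def Cn (A : VOA V) (n : ℤ) : Submodule ℂ V :=
  Submodule.span ℂ {x : V | ∃ u v : V, x = A.Y u (-n) v}

/-- `C₂(V) = span{ u₋₂ v }`. -/
def C2 (A : VOA V) : Submodule ℂ V := Cn A 2

/- ### Auxiliary lemmas -/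

lemma VOA.Y_zero' (A : VOA V) (n : ℤ) : A.Y 0 n = 0 := by
  have h := A.Y_smul 0 0 n
  simpa using h

lemma zsmul_mem' {p : Submodule ℂ V} {x : V} (n : ℤ) (h : x ∈ p) : n • x ∈ p := by
  rw [← Int.cast_smul_eq_zsmul ℂ]; exact p.smul_mem _ h

/-- Any vector `u₋₂v` lies in `C₂`. -/
lemma gen_mem (A : VOA V) (u v : V) : A.Y u (-2) v ∈ C2 A :=
  Submodule.subset_span ⟨u, v, rfl⟩

/-- `u₋₂₋ₖ v ∈ C₂(V)` for all `k : ℕ`. -/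
lemma deep_mem (A : VOA V) : ∀ (k : ℕ) (u v : V), A.Y u (-2 - k) v ∈ C2 A := by
  intro k
  induction k with
  | zero =>
      intro u v
      have h : (-2 - ((0 : ℕ) : ℤ)) = (-2 : ℤ) := by norm_num
      rw [h]; exact gen_mem A u v
  | succ k ih =>
      intro u v
      have ht := congrArg (fun L => L v) (A.translation u (-2 - k))
      simp only [LinearMap.smul_apply] at ht
      -- ht : A.Y (A.T u) (-2 - k) v = (-(-2 - k)) • A.Y u (-2 - k - 1) v
      have hmem : ((-(-2 - (k : ℤ))) • A.Y u (-2 - (k : ℤ) - 1) v) ∈ C2 A := by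
        rw [← ht]; exact ih (A.T u) v
      have hcoef : (-(-2 - (k : ℤ))) = ((k : ℤ) + 2) := by ring
      rw [hcoef, ← Int.cast_smul_eq_zsmul ℂ] at hmem
      have hne : (((k : ℤ) + 2 : ℤ) : ℂ) ≠ 0 := by
        exact_mod_cast (by omega : ((k : ℤ) + 2) ≠ 0)
      have := (C2 A).smul_mem ((((k : ℤ) + 2 : ℤ) : ℂ))⁻¹ hmem
      rw [smul_smul, inv_mul_cancel₀ hne, one_smul] at this
      have he : (-2 - ((k + 1 : ℕ) : ℤ)) = (-2 - (k : ℤ) - 1) := by push_cast; ring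
      rw [he]; exact this

/-- All modes `uₙv` with `n ≤ -2` lie in `C₂(V)`. -/
lemma mem_of_le (A : VOA V) {n : ℤ} (hn : n ≤ -2) (u v : V) : A.Y u n v ∈ C2 A := by
  obtain ⟨k, hk⟩ : ∃ k : ℕ, n = -2 - (k : ℤ) := ⟨(-2 - n).toNat, by omega⟩
  rw [hk]; exact deep_mem A k u v

/-- A `finsum` all of whose terms lie in a submodule lies in the submodule. -/
lemma finsum_mem' (p : Submodule ℂ V) (f : ℕ → V) (h : ∀ i, f i ∈ p) :
    ∑ᶠ i, f i ∈ p := by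
  by_cases hf : (Function.support f).Finite
  · rw [finsum_eq_sum f hf]; exact Submodule.sum_mem _ fun i _ => h i
  · rw [finsum_of_infinite_support hf]; exact p.zero_mem

/-- If a `finsum` has finitely many nonzero terms, its `0`-th term is `x` modulo `p`,
and all other terms lie in `p`, then the finsum is `x` modulo `p`. -/
lemma finsum_sub_head (p : Submodule ℂ V) (f : ℕ → V) (x : V)
    (hfin : ∃ N : ℕ, ∀ n ≥ N, f n = 0)
    (h0 : f 0 - x ∈ p) (h : ∀ i : ℕ, f (i + 1) ∈ p) : (∑ᶠ i, f i) - x ∈ p := by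
  obtain ⟨N, hN⟩ := hfin
  have hsupp : Function.support f ⊆ ↑(Finset.range (N + 1)) := by
    intro i hi
    simp only [Finset.coe_range, Set.mem_Iio]
    by_contra hc
    exact hi (hN i (by omega))
  rw [finsum_eq_finset_sum_of_support_subset f hsupp, Finset.sum_range_succ',
    add_sub_assoc]
  exact p.add_mem (Submodule.sum_mem _ fun i _ => h i) h0

/-- Truncation with a natural-number tail. -/
lemma trunc_nat (A : VOA V) (a b : V) (r : ℤ) :
    ∃ N : ℕ, ∀ i : ℕ, i ≥ N → A.Y a (r + i) b = 0 := by
  obtain ⟨M, hM⟩ := A.truncation a b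
  exact ⟨(M - r).toNat, fun i hi => hM _ (by omega)⟩

/- ### Commutativity modulo `C₂` -/

lemma comm_mem (A : VOA V) (a b : V) : A.Y b (-1) a - A.Y a (-1) b ∈ C2 A := by
  have hB := A.borcherds a b A.vac (-1) 0 (-1)
  have hL : (∑ᶠ i : ℕ, (Ring.choose (-1 : ℤ) i) •
      A.Y (A.Y a (-1 + i) b) (-1 + 0 - i) A.vac) - A.Y a (-1) b ∈ C2 A := by
    apply finsum_sub_head
    · obtain ⟨N, hN⟩ := trunc_nat A a b (-1)
      exact ⟨N, fun n hn => by rw [hN n hn, A.Y_zero']; simp⟩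
    · have e1 : ((-1 : ℤ) + ((0 : ℕ) : ℤ)) = -1 := by norm_num
      have e2 : ((-1 : ℤ) + 0 - ((0 : ℕ) : ℤ)) = -1 := by norm_num
      simp only [e1, e2, Ring.choose_zero_right, one_smul, A.creation_neg_one]
      simp
    · intro i
      exact zsmul_mem' _ (mem_of_le A (by push_cast; omega) _ _)
  have hR : (∑ᶠ i : ℕ, ((-1 : ℤ) ^ i * Ring.choose (-1 : ℤ) i) •
      (A.Y a (-1 + -1 - i) (A.Y b (0 + i) A.vac)
        - ((Int.negOnePow (-1) : ℤ)) • A.Y b (0 + -1 - i) (A.Y a (-1 + i) A.vac)))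
      - A.Y b (-1) a ∈ C2 A := by
    apply finsum_sub_head
    · refine ⟨1, fun n hn => ?_⟩
      rw [A.creation_nonneg b (0 + n) (by positivity),
        A.creation_nonneg a (-1 + n) (by omega)]
      simp
    · have e1 : ((0 : ℤ) + ((0 : ℕ) : ℤ)) = 0 := by norm_num
      have e2 : ((-1 : ℤ) + ((0 : ℕ) : ℤ)) = -1 := by norm_num
      have e3 : ((0 : ℤ) + -1 - ((0 : ℕ) : ℤ)) = -1 := by norm_num
      have e4 : ((Int.negOnePow (-1) : ℤ)) = -1 := by decide
      simp only [e1, e2, e3, e4, A.creation_nonneg b 0 le_rfl, A.creation_neg_one,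
        map_zero, pow_zero, Ring.choose_zero_right, mul_one, one_smul, neg_smul,
        one_smul, zero_sub, neg_neg]
      simp
    · intro i
      rw [A.creation_nonneg b (0 + (i + 1 : ℕ)) (by positivity),
        A.creation_nonneg a (-1 + (i + 1 : ℕ)) (by push_cast; omega)]
      simp
  rw [hB] at hL
  have := (C2 A).sub_mem hL hR
  rwa [sub_sub_sub_cancel_left] at this

/- ### Associativity modulo `C₂` -/

lemma assoc_mem (A : VOA V) (a b c : V) :
    A.Y (A.Y a (-1) b) (-1) c - A.Y a (-1) (A.Y b (-1) c) ∈ C2 A := by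
  have hB := A.borcherds a b c 0 (-1) (-1)
  have hL : (∑ᶠ i : ℕ, (Ring.choose (0 : ℤ) i) •
      A.Y (A.Y a (-1 + i) b) (0 + -1 - i) c) - A.Y (A.Y a (-1) b) (-1) c ∈ C2 A := by
    apply finsum_sub_head
    · obtain ⟨N, hN⟩ := trunc_nat A a b (-1)
      exact ⟨N, fun n hn => by rw [hN n hn, A.Y_zero']; simp⟩
    · have e1 : ((-1 : ℤ) + ((0 : ℕ) : ℤ)) = -1 := by norm_num
      have e2 : ((0 : ℤ) + -1 - ((0 : ℕ) : ℤ)) = -1 := by norm_num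
      simp only [e1, e2, Ring.choose_zero_right, one_smul]
      simp
    · intro i
      exact zsmul_mem' _ (mem_of_le A (by push_cast; omega) _ _)
  have hR : (∑ᶠ i : ℕ, ((-1 : ℤ) ^ i * Ring.choose (-1 : ℤ) i) •
      (A.Y a (0 + -1 - i) (A.Y b (-1 + i) c)
        - ((Int.negOnePow (-1) : ℤ)) • A.Y b (-1 + -1 - i) (A.Y a (0 + i) c)))
      - A.Y a (-1) (A.Y b (-1) c) ∈ C2 A := by
    apply finsum_sub_head
    · obtain ⟨N1, hN1⟩ := trunc_nat A b c (-1)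
      obtain ⟨N2, hN2⟩ := trunc_nat A a c 0
      refine ⟨max N1 N2, fun n hn => ?_⟩
      rw [hN1 n (le_trans (le_max_left _ _) hn), hN2 n (le_trans (le_max_right _ _) hn)]
      simp
    · have e1 : ((-1 : ℤ) + ((0 : ℕ) : ℤ)) = -1 := by norm_num
      have e2 : ((0 : ℤ) + -1 - ((0 : ℕ) : ℤ)) = -1 := by norm_num
      have e3 : ((-1 : ℤ) + -1 - ((0 : ℕ) : ℤ)) = -2 := by norm_num
      have e4 : ((0 : ℤ) + ((0 : ℕ) : ℤ)) = 0 := by norm_num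
      have e5 : ((Int.negOnePow (-1) : ℤ)) = -1 := by decide
      simp only [e1, e2, e3, e4, e5, pow_zero, Ring.choose_zero_right, mul_one,
        one_smul, neg_smul, sub_neg_eq_add, add_sub_cancel_left]
      exact gen_mem A b (A.Y a 0 c)
    · intro i
      refine zsmul_mem' _ ((C2 A).sub_mem ?_ (zsmul_mem' _ ?_))
      · exact mem_of_le A (by push_cast; omega) _ _
      · exact mem_of_le A (by push_cast; omega) _ _
  rw [hB] at hL
  have := (C2 A).sub_mem hR hL
  rwa [sub_sub_sub_cancel_left] at this

/- ### `C₂` is an ideal -/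

lemma left_ideal_gen (A : VOA V) (u v b : V) : A.Y (A.Y u (-2) v) (-1) b ∈ C2 A := by
  have hB := A.borcherds u v b 0 (-1) (-2)
  have hL : (∑ᶠ i : ℕ, (Ring.choose (0 : ℤ) i) •
      A.Y (A.Y u (-2 + i) v) (0 + -1 - i) b) - A.Y (A.Y u (-2) v) (-1) b ∈ C2 A := by
    apply finsum_sub_head
    · obtain ⟨N, hN⟩ := trunc_nat A u v (-2)
      exact ⟨N, fun n hn => by rw [hN n hn, A.Y_zero']; simp⟩
    · have e1 : ((-2 : ℤ) + ((0 : ℕ) : ℤ)) = -2 := by norm_num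
      have e2 : ((0 : ℤ) + -1 - ((0 : ℕ) : ℤ)) = -1 := by norm_num
      simp only [e1, e2, Ring.choose_zero_right, one_smul]
      simp
    · intro i
      exact zsmul_mem' _ (mem_of_le A (by push_cast; omega) _ _)
  have hR : (∑ᶠ i : ℕ, ((-1 : ℤ) ^ i * Ring.choose (-2 : ℤ) i) •
      (A.Y u (0 + -2 - i) (A.Y v (-1 + i) b)
        - ((Int.negOnePow (-2) : ℤ)) • A.Y v (-1 + -2 - i) (A.Y u (0 + i) b))) ∈ C2 A := by
    apply finsum_mem'
    intro i
    refine zsmul_mem' _ ((C2 A).sub_mem ?_ (zsmul_mem' _ ?_))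
    · exact mem_of_le A (by push_cast; omega) _ _
    · exact mem_of_le A (by push_cast; omega) _ _
  rw [hB] at hL
  have := (C2 A).sub_mem hR hL
  rwa [sub_sub_cancel] at this

lemma right_ideal_gen (A : VOA V) (b u v : V) : A.Y b (-1) (A.Y u (-2) v) ∈ C2 A := by
  have hB := A.borcherds b u v (-1) (-2) 0
  have hL : (∑ᶠ i : ℕ, (Ring.choose (-1 : ℤ) i) •
      A.Y (A.Y b (0 + i) u) (-1 + -2 - i) v) ∈ C2 A := by
    apply finsum_mem'
    intro i
    exact zsmul_mem' _ (mem_of_le A (by push_cast; omega) _ _)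
  have hR : (∑ᶠ i : ℕ, ((-1 : ℤ) ^ i * Ring.choose (0 : ℤ) i) •
      (A.Y b (-1 + 0 - i) (A.Y u (-2 + i) v)
        - ((Int.negOnePow 0 : ℤ)) • A.Y u (-2 + 0 - i) (A.Y b (-1 + i) v)))
      - A.Y b (-1) (A.Y u (-2) v) ∈ C2 A := by
    apply finsum_sub_head
    · obtain ⟨N1, hN1⟩ := trunc_nat A u v (-2)
      obtain ⟨N2, hN2⟩ := trunc_nat A b v (-1)
      refine ⟨max N1 N2, fun n hn => ?_⟩
      rw [hN1 n (le_trans (le_max_left _ _) hn), hN2 n (le_trans (le_max_right _ _) hn)]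
      simp
    · have e1 : ((-1 : ℤ) + 0 - ((0 : ℕ) : ℤ)) = -1 := by norm_num
      have e2 : ((-2 : ℤ) + ((0 : ℕ) : ℤ)) = -2 := by norm_num
      have e3 : ((-2 : ℤ) + 0 - ((0 : ℕ) : ℤ)) = -2 := by norm_num
      have e4 : ((-1 : ℤ) + ((0 : ℕ) : ℤ)) = -1 := by norm_num
      have e5 : ((Int.negOnePow 0 : ℤ)) = 1 := by decide
      simp only [e1, e2, e3, e4, e5, pow_zero, Ring.choose_zero_right, mul_one,
        one_smul, sub_sub_cancel_left]
      exact (C2 A).neg_mem (gen_mem A u (A.Y b (-1) v))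
    · intro i
      refine zsmul_mem' _ ((C2 A).sub_mem ?_ (zsmul_mem' _ ?_))
      · exact mem_of_le A (by push_cast; omega) _ _
      · exact mem_of_le A (by push_cast; omega) _ _
  rw [hB] at hL
  have := (C2 A).sub_mem hL hR
  rwa [sub_sub_cancel] at this

/-- Zhu's theorem: the `(-1)`-st product `a·b = a₋₁b` descends to `V/C₂(V)`
and makes it a commutative associative algebra: `C₂(V)` is an ideal for the
product, and the product is commutative and associative modulo `C₂(V)`. -/
theorem stmt_13 (A : VOA V) :
    (∀ a b : V, a ∈ C2 A → A.Y a (-1) b ∈ C2 A ∧ A.Y b (-1) a ∈ C2 A)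
    ∧ (∀ a b : V, A.Y a (-1) b - A.Y b (-1) a ∈ C2 A)
    ∧ (∀ a b c : V,
        A.Y (A.Y a (-1) b) (-1) c - A.Y a (-1) (A.Y b (-1) c) ∈ C2 A) := by
  refine ⟨fun a b ha => ⟨?_, ?_⟩, fun a b => ?_, fun a b c => assoc_mem A a b c⟩
  · -- left multiplication by an element of C2
    induction ha using Submodule.span_induction with
    | mem x hx =>
        obtain ⟨u, v, rfl⟩ := hx
        exact left_ideal_gen A u v b
    | zero => rw [A.Y_zero']; exact (C2 A).zero_mem
    | add x y hx hy ihx ihy => rw [A.Y_add]; exact (C2 A).add_mem ihx ihy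
    | smul c x hx ih => rw [A.Y_smul]; exact (C2 A).smul_mem c ih
  · -- right multiplication by an element of C2
    induction ha using Submodule.span_induction with
    | mem x hx =>
        obtain ⟨u, v, rfl⟩ := hx
        exact right_ideal_gen A b u v
    | zero => rw [map_zero]; exact (C2 A).zero_mem
    | add x y hx hy ihx ihy => rw [map_add]; exact (C2 A).add_mem ihx ihy
    | smul c x hx ih => rw [map_smul]; exact (C2 A).smul_mem c ih
  · have := comm_mem A b a
    exact this
end

section
/- For any positive integer m, the coefficient of z^{2m²k + j} in the product Y(E^m, z)E^m (computed via the lattice vertex operator formulas) at j = 0 yields (E^m)₋₂ₘ₂ₖ₋₁ E^m = E^{2m} + p_{4m²k}(-mα) + p_{4m²k}(mα), where ⟨α, α⟩ = 2k. In particular, taking the m-th products of e^{±mα} gives: e^{mα}_{-2m²k-1} e^{mα} = e^{2mα}, e^{-mα}_{-2m²k-1} e^{-mα} = e^{-2mα}, and e^{∓mα}_{-2m²k-1} e^{±mα} = p_{4m²k}(∓mα). -/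
/-- Lemma 4.2 of the paper. Setting: `L = ℤα` with `⟨α,α⟩ = 2k` (`k ≥ 1`), so
`⟨bα, cα⟩ = 2kbc`. In the lattice vertex algebra `V_L` let `e b` denote
`e^{bα}` and `P b j d` denote `p_j(bα) ⊗ e^{dα}` (Schur polynomial expansion),
with `p₀(bα) ⊗ e^{dα} = e^{dα}`. The lattice vertex operator satisfies
`Y(e^β, z)e^γ = ∑_{j≥0} p_j(β) ⊗ e^{β+γ} z^{⟨β,γ⟩+j}`, i.e. extracting the
coefficient of `z^{-n-1}`:
`(e^{bα})ₙ e^{cα} = p_j(bα) ⊗ e^{(b+c)α}` when `n = -2kbc - j - 1` for some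
`j ∈ ℕ`, and `0` otherwise. Then, with `E^m = e^{mα} + e^{-mα}` and the
products bilinear (additive in each argument), one has
`(E^m)_{-2m²k-1} E^m = E^{2m} + p_{4m²k}(-mα) + p_{4m²k}(mα)`
(the last two terms tensored with `e⁰`); in particular
`(e^{mα})_{-2m²k-1} e^{mα} = e^{2mα}`,
`(e^{-mα})_{-2m²k-1} e^{-mα} = e^{-2mα}`, and
`(e^{∓mα})_{-2m²k-1} e^{±mα} = p_{4m²k}(∓mα) ⊗ e⁰`. -/
theorem stmt_17 {V : Type*} [AddCommGroup V] (k : ℕ) (hk : 1 ≤ k)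
    (Yop : V → ℤ → V → V)
    (hadd_left : ∀ (u v w : V) (n : ℤ), Yop (u + v) n w = Yop u n w + Yop v n w)
    (hadd_right : ∀ (u v w : V) (n : ℤ), Yop u n (v + w) = Yop u n v + Yop u n w)
    (e : ℤ → V) (P : ℤ → ℕ → ℤ → V)
    (hP0 : ∀ b d : ℤ, P b 0 d = e d)
    (hYe : ∀ (b c : ℤ) (j : ℕ),
      Yop (e b) (-(2 * (k : ℤ) * b * c) - (j : ℤ) - 1) (e c) = P b j (b + c))
    (hYe0 : ∀ (b c : ℤ) (n : ℤ),
      (∀ j : ℕ, n ≠ -(2 * (k : ℤ) * b * c) - (j : ℤ) - 1) → Yop (e b) n (e c) = 0)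
    (m : ℕ) (hm : 1 ≤ m) :
    Yop (e m + e (-(m : ℤ))) (-(2 * (m : ℤ) ^ 2 * k) - 1) (e m + e (-(m : ℤ)))
        = (e (2 * m) + e (-(2 * (m : ℤ)))) + P (-(m : ℤ)) (4 * m ^ 2 * k) 0
            + P m (4 * m ^ 2 * k) 0
      ∧ Yop (e m) (-(2 * (m : ℤ) ^ 2 * k) - 1) (e m) = e (2 * m)
      ∧ Yop (e (-(m : ℤ))) (-(2 * (m : ℤ) ^ 2 * k) - 1) (e (-(m : ℤ)))
          = e (-(2 * (m : ℤ)))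
      ∧ Yop (e (-(m : ℤ))) (-(2 * (m : ℤ) ^ 2 * k) - 1) (e m)
          = P (-(m : ℤ)) (4 * m ^ 2 * k) 0
      ∧ Yop (e m) (-(2 * (m : ℤ) ^ 2 * k) - 1) (e (-(m : ℤ)))
          = P m (4 * m ^ 2 * k) 0 := by

  have h1 : Yop (e m) (-(2 * (m : ℤ) ^ 2 * k) - 1) (e m) = e (2 * m) := by
    have := hYe (m : ℤ) (m : ℤ) 0
    rw [hP0] at this
    have hd : (m : ℤ) + (m : ℤ) = 2 * m := by ring
    rw [hd] at this
    rw [← this]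
    ring_nf
  have h2 : Yop (e (-(m : ℤ))) (-(2 * (m : ℤ) ^ 2 * k) - 1) (e (-(m : ℤ)))
      = e (-(2 * (m : ℤ))) := by
    have := hYe (-(m : ℤ)) (-(m : ℤ)) 0
    rw [hP0] at this
    have hd : (-(m : ℤ)) + (-(m : ℤ)) = -(2 * (m : ℤ)) := by ring
    rw [hd] at this
    rw [← this]
    ring_nf
  have h3 : Yop (e (-(m : ℤ))) (-(2 * (m : ℤ) ^ 2 * k) - 1) (e m)
      = P (-(m : ℤ)) (4 * m ^ 2 * k) 0 := by
    have := hYe (-(m : ℤ)) (m : ℤ) (4 * m ^ 2 * k)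
    have hd : (-(m : ℤ)) + (m : ℤ) = 0 := by ring
    rw [hd] at this
    rw [← this]
    push_cast
    ring_nf
  have h4 : Yop (e m) (-(2 * (m : ℤ) ^ 2 * k) - 1) (e (-(m : ℤ)))
      = P m (4 * m ^ 2 * k) 0 := by
    have := hYe (m : ℤ) (-(m : ℤ)) (4 * m ^ 2 * k)
    have hd : (m : ℤ) + (-(m : ℤ)) = 0 := by ring
    rw [hd] at this
    rw [← this]
    push_cast
    ring_nf
  refine ⟨?_, h1, h2, h3, h4⟩
  rw [hadd_left, hadd_right, hadd_right, h1, h2, h3, h4]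
  abel
end
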